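/- With G, H, c as above and ρ a finite-dimensional representation of H, there is an isomorphism of G-representations As^±(ρ^∨) ≅ (As^±(ρ))^∨, where ρ^∨ denotes the dual (contragredient) representation. -/
import Mathlib


open scoped TensorProduct

set_option synthInstance.maxHeartbeats 1000000

/-- `As^±(ρ^∨) ≅ (As^±(ρ))^∨` as `G`-representations. Here `ε = ±1` is the
sign, `F` is `As^ε(ρ)` and `Fd` is `As^ε(ρ^∨)` (with the dual representation
`ρ^∨(h) f = f ∘ ρ(h⁻¹)`), and the isomorphism is via the canonical pairing
`V^∨ ⊗ V^∨ ≅ (V ⊗ V)^∨`, intertwining `Fd` with the contragredient of `F`. -/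
theorem stmt_2 {k G V : Type*} [Field k] [Group G] [AddCommGroup V] [Module k V]
    [FiniteDimensional k V]
    (H : Subgroup G) (hH : H.index = 2) (c : G) (hc : c ∉ H)
    (hnorm : ∀ g ∈ H, c * g * c⁻¹ ∈ H)
    (ε : k) (hε : ε = 1 ∨ ε = -1)
    (ρ : H →* (V ≃ₗ[k] V))
    (F : G →* (TensorProduct k V V ≃ₗ[k] TensorProduct k V V))
    (hFh : ∀ (h : G) (hh : h ∈ H) (x y : V),
        F h (x ⊗ₜ[k] y) = (ρ ⟨h, hh⟩ x) ⊗ₜ[k] (ρ ⟨c * h * c⁻¹, hnorm h hh⟩ y))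
    (hFc : ∀ x y : V, F c (x ⊗ₜ[k] y) = ε • (y ⊗ₜ[k] x))
    (Fd : G →* (TensorProduct k (Module.Dual k V) (Module.Dual k V) ≃ₗ[k]
        TensorProduct k (Module.Dual k V) (Module.Dual k V)))
    (hFdh : ∀ (h : G) (hh : h ∈ H) (f g : Module.Dual k V),
        Fd h (f ⊗ₜ[k] g) =
          (f.comp ((ρ ⟨h, hh⟩)⁻¹ : V ≃ₗ[k] V).toLinearMap) ⊗ₜ[k]
            (g.comp ((ρ ⟨c * h * c⁻¹, hnorm h hh⟩)⁻¹ : V ≃ₗ[k] V).toLinearMap))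
    (hFdc : ∀ f g : Module.Dual k V, Fd c (f ⊗ₜ[k] g) = ε • (g ⊗ₜ[k] f)) :
    ∃ e : TensorProduct k (Module.Dual k V) (Module.Dual k V) ≃ₗ[k]
        Module.Dual k (TensorProduct k V V),
      (∀ (f g : Module.Dual k V) (x y : V), e (f ⊗ₜ[k] g) (x ⊗ₜ[k] y) = f x * g y)
      ∧ (∀ (g : G) (t : TensorProduct k (Module.Dual k V) (Module.Dual k V)),
          e (Fd g t) = (e t).comp ((F g)⁻¹ : TensorProduct k V V ≃ₗ[k] TensorProduct k V V).toLinearMap) := by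
  classical
  set e := TensorProduct.dualDistribEquiv k V V with he
  have heval : ∀ (f g : Module.Dual k V) (x y : V),
      e (f ⊗ₜ[k] g) (x ⊗ₜ[k] y) = f x * g y := by
    intro f g x y
    simp [he, TensorProduct.dualDistribEquiv, TensorProduct.dualDistribEquivOfBasis,
      TensorProduct.dualDistrib_apply]
  have hsymm : ∀ g : G,
      ((F g)⁻¹ : TensorProduct k V V ≃ₗ[k] TensorProduct k V V) = (F g).symm := fun _ => rfl
  have hε2 : ε * ε = 1 := by rcases hε with h | h <;> simp [h]
  -- inverse of F on H-elements, on pure tensors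
  have hFinv : ∀ (h : G) (hh : h ∈ H) (x y : V),
      (F h).symm (x ⊗ₜ[k] y) =
        ((ρ ⟨h, hh⟩).symm x) ⊗ₜ[k] ((ρ ⟨c * h * c⁻¹, hnorm h hh⟩).symm y) := by
    intro h hh x y
    rw [LinearEquiv.symm_apply_eq, hFh h hh]
    simp
  have hFcinv : ∀ x y : V, (F c).symm (x ⊗ₜ[k] y) = ε • (y ⊗ₜ[k] x) := by
    intro x y
    rw [LinearEquiv.symm_apply_eq, map_smul, hFc, smul_smul, hε2, one_smul]
  -- the property P
  have Ph : ∀ (h : G) (hh : h ∈ H) (t : TensorProduct k (Module.Dual k V) (Module.Dual k V)),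
      e (Fd h t) = (e t).comp ((F h)⁻¹ : TensorProduct k V V ≃ₗ[k] TensorProduct k V V).toLinearMap := by
    intro h hh t
    induction t using TensorProduct.induction_on with
    | zero => simp only [_root_.map_zero, LinearMap.zero_comp]
    | tmul f g =>
      rw [hFdh h hh]
      apply TensorProduct.ext'
      intro x y
      rw [hsymm]
      simp only [LinearMap.coe_comp, Function.comp_apply, LinearEquiv.coe_coe]
      rw [hFinv h hh, heval, heval]
      rfl
    | add t₁ t₂ ih₁ ih₂ => simp [map_add, ih₁, ih₂, LinearMap.add_comp]
  have Pc : ∀ t : TensorProduct k (Module.Dual k V) (Module.Dual k V),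
      e (Fd c t) = (e t).comp ((F c)⁻¹ : TensorProduct k V V ≃ₗ[k] TensorProduct k V V).toLinearMap := by
    intro t
    induction t using TensorProduct.induction_on with
    | zero => simp only [_root_.map_zero, LinearMap.zero_comp]
    | tmul f g =>
      rw [hFdc]
      apply TensorProduct.ext'
      intro x y
      rw [hsymm]
      simp only [LinearMap.coe_comp, Function.comp_apply, LinearEquiv.coe_coe, map_smul,
        LinearMap.smul_apply]
      rw [hFcinv, heval, map_smul, heval]
      simp [mul_comm]
    | add t₁ t₂ ih₁ ih₂ => simp [map_add, ih₁, ih₂, LinearMap.add_comp]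
  have Pmul : ∀ g₁ g₂ : G,
      (∀ t, e (Fd g₁ t) = (e t).comp ((F g₁)⁻¹ : TensorProduct k V V ≃ₗ[k] TensorProduct k V V).toLinearMap) →
      (∀ t, e (Fd g₂ t) = (e t).comp ((F g₂)⁻¹ : TensorProduct k V V ≃ₗ[k] TensorProduct k V V).toLinearMap) →
      ∀ t, e (Fd (g₁ * g₂) t) =
        (e t).comp ((F (g₁ * g₂))⁻¹ : TensorProduct k V V ≃ₗ[k] TensorProduct k V V).toLinearMap := by
    intro g₁ g₂ P₁ P₂ t
    have : Fd (g₁ * g₂) t = Fd g₁ (Fd g₂ t) := by rw [map_mul]; rfl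
    rw [this, P₁, P₂, map_mul, mul_inv_rev]
    ext v
    simp [hsymm]
  refine ⟨e, heval, ?_⟩
  intro g
  by_cases hg : g ∈ H
  · exact Ph g hg
  · have hc' : g * c⁻¹ ∈ H := by
      rw [Subgroup.mul_mem_iff_of_index_two hH, inv_mem_iff]
      exact iff_of_false hg hc
    have hdecomp : g = (g * c⁻¹) * c := by group
    rw [hdecomp]
    exact Pmul _ _ (Ph _ hc') Pc
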